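/- arXiv:1810.00767 — 3 statements merged into one kernel-verified Lean document; each statement's English description precedes it below -/
import Mathlib

section
/- Under consistency (A = a implies Y^a = Y), no unobserved confounders for the control potential outcome (Y^0 independent of A given X), monotonicity (Y^1 ≥ Y^0), and positivity, the probability of causation PC(x) = P(Y^0 = 0 | Y = 1, A = 1, X = x) equals 1 - E[Y | A = 0, X = x] / E[Y | A = 1, X = x]. -/
/-!
Conditioning on `X = x` reduces everything to a finite measure `ν`. There, consistency and
no confounding give `P(Y = 1 ∣ A = 0) = P(Y⁰ = 1)`, while monotonicity says that a treated unit
with `Y⁰ = 1` has `Y = Y¹ = 1`, so that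
`P(Y = 1, A = 1, Y⁰ = 0) = P(Y = 1, A = 1) - P(Y⁰ = 1) P(A = 1)`.
Dividing by `P(Y = 1, A = 1)` gives the formula.
-/

open MeasureTheory ProbabilityTheory
open scoped ENNReal

section General

variable {Ω : Type*} [MeasurableSpace Ω] {ν : Measure Ω} {s t r : Set Ω}

lemma cond_real_apply (hs : MeasurableSet s) (t : Set Ω) :
    (ν[|s]).real t = ν.real (s ∩ t) / ν.real s := by
  rw [measureReal_def, cond_apply hs, ENNReal.toReal_mul, ENNReal.toReal_inv, inv_mul_eq_div,
    measureReal_def, measureReal_def]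

variable [IsFiniteMeasure ν]

lemma cond_eq_of_inter_eq_of_indep (hs : MeasurableSet s) (hs₀ : ν s ≠ 0)
    (hst : s ∩ t = s ∩ r) (hindep : ν (r ∩ s) = ν r * ν s) : ν[t | s] = ν r := by
  rw [cond_apply hs, hst, Set.inter_comm, hindep, mul_comm, mul_assoc,
    ENNReal.mul_inv_cancel hs₀ (measure_ne_top ν s), mul_one]

lemma measureReal_sdiff_eq_sub_of_inter_ae_eq (hr : MeasurableSet r)
    (h : (s ∩ r : Set Ω) =ᵐ[ν] t) :
    ν.real (s \ r) = ν.real s - ν.real t := by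
  rw [← measureReal_inter_add_sdiff (s := s) hr, measureReal_congr h]
  ring

end General

section Causal

variable {Ω : Type*} [MeasurableSpace Ω] {ν : Measure Ω} {A Y Y0 Y1 : Ω → ℝ}

lemma responders_inter_Y0_one_ae_eq (hYbin : ∀ ω, Y ω = 0 ∨ Y ω = 1)
    (hcons1 : ∀ ω, A ω = 1 → Y ω = Y1 ω) (hmono : ∀ᵐ ω ∂ν, Y0 ω ≤ Y1 ω) :
    ({ω | Y ω = 1 ∧ A ω = 1} ∩ {ω | Y0 ω = 1} : Set Ω) =ᵐ[ν]
      ({ω | Y0 ω = 1} ∩ {ω | A ω = 1} : Set Ω) := by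
  filter_upwards [hmono] with ω hω
  simp only [eq_iff_iff]
  refine ⟨fun ⟨⟨_, hA⟩, hY0⟩ => ⟨hY0, hA⟩, fun ⟨hY0, hA⟩ => ⟨⟨?_, hA⟩, hY0⟩⟩
  have : 1 ≤ Y ω := by rw [hcons1 ω hA, ← hY0]; exact hω
  rcases hYbin ω with h | h <;> [linarith; exact h]

variable [IsFiniteMeasure ν]

lemma cond_response_control_eq_measure_Y0 (hA : Measurable A)
    (hcons0 : ∀ ω, A ω = 0 → Y ω = Y0 ω) (hposA0 : ν {ω | A ω = 0} ≠ 0)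
    (hindep : ν ({ω | Y0 ω = 1} ∩ {ω | A ω = 0}) = ν {ω | Y0 ω = 1} * ν {ω | A ω = 0}) :
    ν[{ω | Y ω = 1} | {ω | A ω = 0}] = ν {ω | Y0 ω = 1} := by
  refine cond_eq_of_inter_eq_of_indep (hA (measurableSet_singleton 0)) hposA0 ?_ hindep
  ext ω
  simp only [Set.mem_inter_iff, Set.mem_ofPred_eq]
  exact and_congr_right fun h => by rw [hcons0 ω h]

lemma measureReal_responders_Y0_zero (hY0m : Measurable Y0)
    (hYbin : ∀ ω, Y ω = 0 ∨ Y ω = 1) (hY0bin : ∀ ω, Y0 ω = 0 ∨ Y0 ω = 1)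
    (hcons1 : ∀ ω, A ω = 1 → Y ω = Y1 ω) (hmono : ∀ᵐ ω ∂ν, Y0 ω ≤ Y1 ω)
    (hindep : ν ({ω | Y0 ω = 1} ∩ {ω | A ω = 1}) = ν {ω | Y0 ω = 1} * ν {ω | A ω = 1}) :
    ν.real ({ω | Y ω = 1 ∧ A ω = 1} ∩ {ω | Y0 ω = 0})
      = ν.real {ω | Y ω = 1 ∧ A ω = 1} - ν.real {ω | Y0 ω = 1} * ν.real {ω | A ω = 1} := by
  have hY0_zero : {ω | Y0 ω = 0} = {ω | Y0 ω = 1}ᶜ := by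
    ext ω
    rcases hY0bin ω with h | h <;> simp [h]
  have hY0_one : MeasurableSet {ω | Y0 ω = 1} := hY0m (measurableSet_singleton 1)
  rw [hY0_zero, ← Set.sdiff_eq, measureReal_sdiff_eq_sub_of_inter_ae_eq hY0_one
    (responders_inter_Y0_one_ae_eq hYbin hcons1 hmono)]
  simp only [measureReal_def, hindep, ENNReal.toReal_mul]

theorem probability_of_causation_eq (hA : Measurable A) (hY : Measurable Y)
    (hY0m : Measurable Y0) (hYbin : ∀ ω, Y ω = 0 ∨ Y ω = 1)
    (hY0bin : ∀ ω, Y0 ω = 0 ∨ Y0 ω = 1)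
    (hcons0 : ∀ ω, A ω = 0 → Y ω = Y0 ω) (hcons1 : ∀ ω, A ω = 1 → Y ω = Y1 ω)
    (hmono : ∀ᵐ ω ∂ν, Y0 ω ≤ Y1 ω)
    (hposA0 : ν {ω | A ω = 0} ≠ 0) (hposYA : ν {ω | Y ω = 1 ∧ A ω = 1} ≠ 0)
    (hnuc : ∀ s t : ℝ,
      ν ({ω | Y0 ω = s} ∩ {ω | A ω = t}) = ν {ω | Y0 ω = s} * ν {ω | A ω = t}) :
    (ν[|{ω | Y ω = 1 ∧ A ω = 1}]).real {ω | Y0 ω = 0}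
      = 1 - (ν[|{ω | A ω = 0}]).real {ω | Y ω = 1} / (ν[|{ω | A ω = 1}]).real {ω | Y ω = 1} := by
  have hA1 : MeasurableSet {ω | A ω = 1} := hA (measurableSet_singleton 1)
  have hresp : MeasurableSet {ω | Y ω = 1 ∧ A ω = 1} :=
    (hY (measurableSet_singleton 1)).inter hA1
  have hresp₀ : ν.real {ω | Y ω = 1 ∧ A ω = 1} ≠ 0 :=
    ENNReal.toReal_ne_zero.mpr ⟨hposYA, measure_ne_top ν _⟩
  have hcontrol : (ν[|{ω | A ω = 0}]).real {ω | Y ω = 1} = ν.real {ω | Y0 ω = 1} :=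
    congrArg ENNReal.toReal (cond_response_control_eq_measure_Y0 hA hcons0 hposA0 (hnuc 1 0))
  have htreated : (ν[|{ω | A ω = 1}]).real {ω | Y ω = 1}
      = ν.real {ω | Y ω = 1 ∧ A ω = 1} / ν.real {ω | A ω = 1} := by
    rw [cond_real_apply hA1, Set.inter_comm]
    rfl
  rw [cond_real_apply hresp, measureReal_responders_Y0_zero hY0m hYbin hY0bin hcons1 hmono
    (hnuc 1 1), hcontrol, htreated, div_div_eq_mul_div, sub_div, div_self hresp₀]

end Causal

theorem stmt_0_general
    {Ω 𝒳 : Type*} [MeasurableSpace Ω]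
    (μ : Measure Ω) [IsProbabilityMeasure μ]
    (X : Ω → 𝒳) (A Y Y0 Y1 : Ω → ℝ) (x : 𝒳)
    (hA : Measurable A) (hY : Measurable Y)
    (hY0m : Measurable Y0)
    (hxMeas : MeasurableSet {ω | X ω = x})
    -- binary variables
    (hYbin : ∀ ω, Y ω = 0 ∨ Y ω = 1)
    (hY0bin : ∀ ω, Y0 ω = 0 ∨ Y0 ω = 1)
    -- consistency: A = a implies Y = Yᵃ
    (hcons0 : ∀ ω, A ω = 0 → Y ω = Y0 ω)
    (hcons1 : ∀ ω, A ω = 1 → Y ω = Y1 ω)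
    -- monotonicity: Y¹ ≥ Y⁰ almost surely
    (hmono : ∀ᵐ ω ∂μ, Y0 ω ≤ Y1 ω)
    -- positivity
    (hposA0 : μ[|{ω | X ω = x}] {ω | A ω = 0} ≠ 0)
    (hposYA : μ[|{ω | X ω = x}] {ω | Y ω = 1 ∧ A ω = 1} ≠ 0)
    -- no unobserved confounders: Y⁰ ⟂ A ∣ X = x
    (hnuc : ∀ s t : ℝ,
      μ[|{ω | X ω = x}] ({ω | Y0 ω = s} ∩ {ω | A ω = t})
        = μ[|{ω | X ω = x}] {ω | Y0 ω = s} * μ[|{ω | X ω = x}] {ω | A ω = t}) :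
    (μ[|{ω | Y ω = 1 ∧ A ω = 1 ∧ X ω = x}] {ω | Y0 ω = 0}).toReal
      = 1 - (μ[|{ω | A ω = 0 ∧ X ω = x}] {ω | Y ω = 1}).toReal
            / (μ[|{ω | A ω = 1 ∧ X ω = x}] {ω | Y ω = 1}).toReal := by
  have hcond : ∀ {s : Set Ω}, MeasurableSet s →
      μ[|{ω | X ω = x}][|s] = μ[|s ∩ {ω | X ω = x}] := fun hs => by
    rw [cond_cond_eq_cond_inter hxMeas hs, Set.inter_comm]
  have hA0 : MeasurableSet {ω | A ω = 0} := hA (measurableSet_singleton 0)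
  have hA1 : MeasurableSet {ω | A ω = 1} := hA (measurableSet_singleton 1)
  have hresp : MeasurableSet {ω | Y ω = 1 ∧ A ω = 1} :=
    (hY (measurableSet_singleton 1)).inter hA1
  have hpc := probability_of_causation_eq hA hY hY0m hYbin hY0bin hcons0 hcons1
    (cond_absolutelyContinuous.ae_le hmono) hposA0 hposYA hnuc
  simpa only [hcond hresp, hcond hA0, hcond hA1, ← Set.ofPred_and, and_assoc,
    measureReal_def] using hpc

/-- Under positivity, consistency, no unobserved confounders for `Y⁰`, and monotonicity,
the probability of causation `PC(x) = P(Y⁰ = 0 ∣ Y = 1, A = 1, X = x)` equals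
`1 - E[Y ∣ A = 0, X = x] / E[Y ∣ A = 1, X = x]`. -/
theorem stmt_0
    {Ω 𝒳 : Type*} [MeasurableSpace Ω] [MeasurableSpace 𝒳]
    (μ : Measure Ω) [IsProbabilityMeasure μ]
    (X : Ω → 𝒳) (A Y Y0 Y1 : Ω → ℝ) (x : 𝒳)
    (hX : Measurable X) (hA : Measurable A) (hY : Measurable Y)
    (hY0m : Measurable Y0) (hY1m : Measurable Y1)
    (hxMeas : MeasurableSet {ω | X ω = x})
    -- binary variables
    (hAbin : ∀ ω, A ω = 0 ∨ A ω = 1)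
    (hYbin : ∀ ω, Y ω = 0 ∨ Y ω = 1)
    (hY0bin : ∀ ω, Y0 ω = 0 ∨ Y0 ω = 1)
    (hY1bin : ∀ ω, Y1 ω = 0 ∨ Y1 ω = 1)
    -- consistency: A = a implies Y = Yᵃ
    (hcons0 : ∀ ω, A ω = 0 → Y ω = Y0 ω)
    (hcons1 : ∀ ω, A ω = 1 → Y ω = Y1 ω)
    -- monotonicity: Y¹ ≥ Y⁰ almost surely
    (hmono : ∀ᵐ ω ∂μ, Y0 ω ≤ Y1 ω)
    -- positivity
    (hposX : μ {ω | X ω = x} ≠ 0)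
    (hposA0 : μ[|{ω | X ω = x}] {ω | A ω = 0} ≠ 0)
    (hposA1 : μ[|{ω | X ω = x}] {ω | A ω = 1} ≠ 0)
    (hposYA : μ[|{ω | X ω = x}] {ω | Y ω = 1 ∧ A ω = 1} ≠ 0)
    -- no unobserved confounders: Y⁰ ⟂ A ∣ X = x
    (hnuc : ∀ s t : ℝ,
      μ[|{ω | X ω = x}] ({ω | Y0 ω = s} ∩ {ω | A ω = t})
        = μ[|{ω | X ω = x}] {ω | Y0 ω = s} * μ[|{ω | X ω = x}] {ω | A ω = t}) :
    (μ[|{ω | Y ω = 1 ∧ A ω = 1 ∧ X ω = x}] {ω | Y0 ω = 0}).toReal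
      = 1 - (μ[|{ω | A ω = 0 ∧ X ω = x}] {ω | Y ω = 1}).toReal
            / (μ[|{ω | A ω = 1 ∧ X ω = x}] {ω | Y ω = 1}).toReal :=
  stmt_0_general μ X A Y Y0 Y1 x hA hY hY0m hxMeas hYbin hY0bin hcons0 hcons1 hmono hposA0 hposYA
    hnuc
end

section
/- Without the monotonicity assumption but under positivity, consistency, and Y^0 ⊥ A | X, the quantity 1 - E[Y | A = 0, X = x] / E[Y | A = 1, X = x] is a lower bound for the probability of causation P(Y^0 = 0 | Y = 1, A = 1, X = x). -/
open MeasureTheory ProbabilityTheory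
open scoped ENNReal

/-! By consistency, `E[Y ∣ A = 0, X = x] = P(Y⁰ = 1 ∣ A = 0, X = x)`, which equals `P(Y⁰ = 1 ∣ X = x)`
by `Y⁰ ⟂ A ∣ X`. The complementary event `Y⁰ = 1` inside `{Y = 1, A = 1}` is contained in
`{Y⁰ = 1, A = 1}`, whose probability factorises as `P(Y⁰ = 1) P(A = 1)` given `X = x`; dividing by
`P(Y = 1, A = 1)` gives exactly the ratio `E[Y ∣ A = 0, X = x] / E[Y ∣ A = 1, X = x]`. -/

namespace ProbabilityTheory

variable {Ω : Type*} [MeasurableSpace Ω] {μ : Measure Ω} {s t : Set Ω}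

lemma toReal_cond_apply (hs : MeasurableSet s) (t : Set Ω) :
    (μ[t | s]).toReal = μ.real (s ∩ t) / μ.real s := by
  rw [cond_apply hs, ENNReal.toReal_mul, ENNReal.toReal_inv, measureReal_def, measureReal_def,
    inv_mul_eq_div]

lemma cond_eq_of_measure_inter_eq_mul [IsFiniteMeasure μ] (hs : MeasurableSet s)
    (hindep : μ (t ∩ s) = μ t * μ s) (hs₀ : μ s ≠ 0) : μ[t | s] = μ t := by
  rw [cond_apply hs, Set.inter_comm, hindep, mul_comm, mul_assoc,
    ENNReal.mul_inv_cancel hs₀ (measure_ne_top μ s), mul_one]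

lemma cond_setOf_and {p q : Ω → Prop} [IsFiniteMeasure μ] (hp : MeasurableSet {ω | p ω})
    (hq : MeasurableSet {ω | q ω}) :
    μ[|{ω | p ω ∧ q ω}] = μ[|{ω | q ω}][|{ω | p ω}] := by
  rw [cond_cond_eq_cond_inter hq hp, Set.ofPred_and, Set.inter_comm]

/-- Events `a₀, a₁` play the roles of `A = 0, A = 1`, `y` of `Y = 1` and `e, e'` of
`Y⁰ = 1, Y⁰ = 0`. -/
theorem one_sub_div_cond_le_cond {ν : Measure Ω} [IsFiniteMeasure ν] {a₀ a₁ y e e' : Set Ω}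
    (ha₀ : MeasurableSet a₀) (ha₁ : MeasurableSet a₁) (hy : MeasurableSet y)
    (hcons : a₀ ∩ y = a₀ ∩ e) (he : eᶜ ⊆ e')
    (hindep₀ : ν (e ∩ a₀) = ν e * ν a₀) (hindep₁ : ν (e ∩ a₁) = ν e * ν a₁)
    (ha₀_ne : ν a₀ ≠ 0) (hy_ne : ν (a₁ ∩ y) ≠ 0) :
    1 - (ν[y | a₀]).toReal / (ν[y | a₁]).toReal ≤ (ν[e' | a₁ ∩ y]).toReal := by
  have hq₀ : ν[y | a₀] = ν e := by
    rw [cond_apply ha₀, hcons, ← cond_apply ha₀, cond_eq_of_measure_inter_eq_mul ha₀ hindep₀ ha₀_ne]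
  have hindep₁_real : ν.real (e ∩ a₁) = ν.real e * ν.real a₁ := by
    simp only [measureReal_def, hindep₁, ENNReal.toReal_mul]
  have hy_pos : 0 < ν.real (a₁ ∩ y) := ENNReal.toReal_pos hy_ne (measure_ne_top ν _)
  have hdiff : ν.real (a₁ ∩ y) - ν.real (e ∩ a₁) ≤ ν.real (a₁ ∩ y ∩ e') :=
    calc ν.real (a₁ ∩ y) - ν.real (e ∩ a₁) ≤ ν.real ((a₁ ∩ y) \ (e ∩ a₁)) := le_measureReal_sdiff
      _ ≤ ν.real (a₁ ∩ y ∩ e') := measureReal_mono fun ω ⟨⟨hω₁, hωy⟩, hωe⟩ =>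
        ⟨⟨hω₁, hωy⟩, he fun hω => hωe ⟨hω, hω₁⟩⟩
  rw [hq₀, toReal_cond_apply ha₁, toReal_cond_apply (ha₁.inter hy), ← measureReal_def,
    div_div_eq_mul_div, ← hindep₁_real, one_sub_div hy_pos.ne']
  gcongr

end ProbabilityTheory

theorem stmt_2_general
    {Ω 𝒳 : Type*} [MeasurableSpace Ω]
    (μ : Measure Ω) [IsProbabilityMeasure μ]
    (X : Ω → 𝒳) (A Y Y0 : Ω → ℝ) (x : 𝒳)
    (hA : Measurable A) (hY : Measurable Y)
    (hxMeas : MeasurableSet {ω | X ω = x})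
    -- binary variables
    (hY0bin : ∀ ω, Y0 ω = 0 ∨ Y0 ω = 1)
    -- consistency: A = a implies Y = Yᵃ
    (hcons0 : ∀ ω, A ω = 0 → Y ω = Y0 ω)
    -- positivity
    (hposA0 : μ[|{ω | X ω = x}] {ω | A ω = 0} ≠ 0)
    (hposYA : μ[|{ω | X ω = x}] {ω | Y ω = 1 ∧ A ω = 1} ≠ 0)
    -- no unobserved confounders: Y⁰ ⟂ A ∣ X = x
    (hnuc : ∀ s t : ℝ,
      μ[|{ω | X ω = x}] ({ω | Y0 ω = s} ∩ {ω | A ω = t})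
        = μ[|{ω | X ω = x}] {ω | Y0 ω = s} * μ[|{ω | X ω = x}] {ω | A ω = t}) :
    1 - (μ[|{ω | A ω = 0 ∧ X ω = x}] {ω | Y ω = 1}).toReal
          / (μ[|{ω | A ω = 1 ∧ X ω = x}] {ω | Y ω = 1}).toReal
      ≤ (μ[|{ω | Y ω = 1 ∧ A ω = 1 ∧ X ω = x}] {ω | Y0 ω = 0}).toReal := by
  have hA₀ : MeasurableSet {ω | A ω = 0} := hA (measurableSet_singleton 0)
  have hA₁ : MeasurableSet {ω | A ω = 1} := hA (measurableSet_singleton 1)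
  have hY₁ : MeasurableSet {ω | Y ω = 1} := hY (measurableSet_singleton 1)
  have hA₁X : MeasurableSet {ω | A ω = 1 ∧ X ω = x} := hA₁.inter hxMeas
  rw [cond_setOf_and hA₀ hxMeas, cond_setOf_and hA₁ hxMeas, cond_setOf_and hY₁ hA₁X,
    cond_setOf_and hA₁ hxMeas, cond_cond_eq_cond_inter hA₁ hY₁]
  refine one_sub_div_cond_le_cond hA₀ hA₁ hY₁ ?_ (fun ω hω => (hY0bin ω).resolve_right hω)
    (hnuc 1 0) (hnuc 1 1) hposA0 (by rwa [Set.inter_comm])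
  ext ω
  show A ω = 0 ∧ Y ω = 1 ↔ A ω = 0 ∧ Y0 ω = 1
  exact and_congr_right fun h₀ => by rw [hcons0 ω h₀]

/-- Without monotonicity, but under positivity, consistency and `Y⁰ ⟂ A ∣ X`,
the quantity `1 - E[Y ∣ A = 0, X = x] / E[Y ∣ A = 1, X = x]` is a lower bound for the
probability of causation `P(Y⁰ = 0 ∣ Y = 1, A = 1, X = x)`. -/
theorem stmt_2
    {Ω 𝒳 : Type*} [MeasurableSpace Ω] [MeasurableSpace 𝒳]
    (μ : Measure Ω) [IsProbabilityMeasure μ]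
    (X : Ω → 𝒳) (A Y Y0 Y1 : Ω → ℝ) (x : 𝒳)
    (hX : Measurable X) (hA : Measurable A) (hY : Measurable Y)
    (hY0m : Measurable Y0) (hY1m : Measurable Y1)
    (hxMeas : MeasurableSet {ω | X ω = x})
    -- binary variables
    (hAbin : ∀ ω, A ω = 0 ∨ A ω = 1)
    (hYbin : ∀ ω, Y ω = 0 ∨ Y ω = 1)
    (hY0bin : ∀ ω, Y0 ω = 0 ∨ Y0 ω = 1)
    (hY1bin : ∀ ω, Y1 ω = 0 ∨ Y1 ω = 1)
    -- consistency: A = a implies Y = Yᵃ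
    (hcons0 : ∀ ω, A ω = 0 → Y ω = Y0 ω)
    (hcons1 : ∀ ω, A ω = 1 → Y ω = Y1 ω)
    -- positivity
    (hposX : μ {ω | X ω = x} ≠ 0)
    (hposA0 : μ[|{ω | X ω = x}] {ω | A ω = 0} ≠ 0)
    (hposA1 : μ[|{ω | X ω = x}] {ω | A ω = 1} ≠ 0)
    (hposYA : μ[|{ω | X ω = x}] {ω | Y ω = 1 ∧ A ω = 1} ≠ 0)
    -- no unobserved confounders: Y⁰ ⟂ A ∣ X = x
    (hnuc : ∀ s t : ℝ,
      μ[|{ω | X ω = x}] ({ω | Y0 ω = s} ∩ {ω | A ω = t})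
        = μ[|{ω | X ω = x}] {ω | Y0 ω = s} * μ[|{ω | X ω = x}] {ω | A ω = t}) :
    1 - (μ[|{ω | A ω = 0 ∧ X ω = x}] {ω | Y ω = 1}).toReal
          / (μ[|{ω | A ω = 1 ∧ X ω = x}] {ω | Y ω = 1}).toReal
      ≤ (μ[|{ω | Y ω = 1 ∧ A ω = 1 ∧ X ω = x}] {ω | Y0 ω = 0}).toReal :=
  stmt_2_general μ X A Y Y0 x hA hY hxMeas hY0bin hcons0 hposA0 hposYA hnuc
end

section
/- If the parametric model is correctly specified, i.e., γ(x) = g(x;β₀) for all x, then the uncentered efficient influence function evaluated at β₀ reduces to φ(Z;β₀,η) = h(X;β₀)·[(μ_0(X)/μ_1(X)²)·A(Y-μ_1(X))/π(X) - (1/μ_1(X))·(1-A)(Y-μ_0(X))/(1-π(X))], and this has conditional mean zero given X; hence β₀ solves the population moment condition Ψ(β) = 0. -/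
/-!
Under correct specification `γ - g` vanishes, and what remains of `φ` is
`c₁(X) A (Y - μ₁(X)) - c₀(X) (1 - A)(Y - μ₀(X))` with `X`-measurable weights `c₁, c₀`.
Pulling the weight out of each term leaves `E[AY | X] - μ₁ E[A | X] = π μ₁ - μ₁ π = 0`, and
likewise on the control arm. The pull-out needs integrability: the two terms are `A φ` and
`(A - 1) φ`, and `μ₁ A`, `μ₀ (1 - A)` are bounded because `0 ≤ AY ≤ A` forces
`μ₁ ∈ [0, 1]` a.e. (and similarly for `μ₀`). The tower property then gives
`Ψ(β₀) = E[φ] = 0`.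
-/

open MeasureTheory ProbabilityTheory

section

variable {Ω : Type*} {m m₀ : MeasurableSpace Ω} {μ : Measure Ω}

theorem condExp_sub_mul_ae_eq_zero {f g c : Ω → ℝ} (hc : StronglyMeasurable[m] c)
    (hf : Integrable f μ) (hg : Integrable g μ) (hcg : Integrable (c * g) μ)
    (hfg : μ[f | m] =ᵐ[μ] c * μ[g | m]) : μ[f - c * g | m] =ᵐ[μ] 0 := by
  filter_upwards [condExp_sub hf hcg m, condExp_mul_of_stronglyMeasurable_left hc hcg hg, hfg]
    with ω hsub hpull hf'
  simp only [hsub, Pi.sub_apply, hpull, hf', Pi.zero_apply, sub_self]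

theorem condExp_mul_ae_eq_zero {f c : Ω → ℝ} (hc : StronglyMeasurable[m] c)
    (hf : Integrable f μ) (hcf : Integrable (c * f) μ) (hf0 : μ[f | m] =ᵐ[μ] 0) :
    μ[c * f | m] =ᵐ[μ] 0 := by
  filter_upwards [condExp_mul_of_stronglyMeasurable_left hc hcf hf, hf0] with ω hpull hf0'
  simp only [hpull, Pi.mul_apply, hf0', Pi.zero_apply, mul_zero]

theorem ae_mem_Icc_of_condExp_eq_mul {f g p q : Ω → ℝ} (hf : Integrable f μ)
    (hg : Integrable g μ) (hf0 : 0 ≤ᵐ[μ] f) (hfg : f ≤ᵐ[μ] g) (hp : ∀ ω, 0 < p ω)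
    (hfp : μ[f | m] =ᵐ[μ] p * q) (hgp : μ[g | m] =ᵐ[μ] p) :
    ∀ᵐ ω ∂μ, q ω ∈ Set.Icc 0 1 := by
  filter_upwards [condExp_nonneg (m := m) hf0, condExp_mono (m := m) hf hg hfg, hfp, hgp]
    with ω hnonneg hmono hfω hgω
  simp only [Pi.zero_apply, hfω, hgω, Pi.mul_apply] at hnonneg hmono
  exact ⟨nonneg_of_mul_nonneg_right hnonneg (hp ω),
    (mul_le_iff_le_one_right (hp ω)).mp hmono⟩

theorem condExp_mul_sub_mul_ae_eq_zero {f g p q c : Ω → ℝ}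
    (hq : StronglyMeasurable[m] q) (hc : StronglyMeasurable[m] c) (hm : m ≤ m₀)
    (hf : Integrable f μ) (hg : Integrable g μ) (hf0 : 0 ≤ᵐ[μ] f) (hfg : f ≤ᵐ[μ] g)
    (hp : ∀ ω, 0 < p ω) (hfp : μ[f | m] =ᵐ[μ] p * q) (hgp : μ[g | m] =ᵐ[μ] p)
    (hint : Integrable (c * (f - q * g)) μ) : μ[c * (f - q * g) | m] =ᵐ[μ] 0 := by
  have hqg : Integrable (q * g) μ := by
    refine hg.bdd_mul (c := 1) (hq.mono hm).aestronglyMeasurable ?_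
    filter_upwards [ae_mem_Icc_of_condExp_eq_mul hf hg hf0 hfg hp hfp hgp] with ω hω
    rw [Real.norm_eq_abs, abs_le]
    exact ⟨by linarith [hω.1], hω.2⟩
  refine condExp_mul_ae_eq_zero hc (hf.sub hqg) hint ?_
  refine condExp_sub_mul_ae_eq_zero hq hf hg hqg ?_
  filter_upwards [hfp, hgp] with ω hfω hgω
  simp only [hfω, hgω, Pi.mul_apply, mul_comm]

theorem integrable_of_forall_abs_le_one [IsFiniteMeasure μ] {F : Ω → ℝ} (hF : Measurable F)
    (hF1 : ∀ ω, |F ω| ≤ 1) : Integrable F μ :=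
  Integrable.of_bound hF.aestronglyMeasurable 1 (ae_of_all _ hF1)

theorem abs_le_one_of_eq_zero_or_eq_one {a : ℝ} (ha : a = 0 ∨ a = 1) : |a| ≤ 1 := by
  rcases ha with rfl | rfl <;> norm_num

/-- `p` is the propensity `P(A = 1 | m)` and `q₁`, `q₀` are the arm means `E[Y | A = a, m]`. -/
theorem condExp_aipw_ae_eq_zero [IsFiniteMeasure μ] (hm : m ≤ m₀) {A Y p q₀ q₁ c₀ c₁ : Ω → ℝ}
    (hA : Measurable A) (hY : Measurable Y) (hAbin : ∀ ω, A ω = 0 ∨ A ω = 1)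
    (hYbin : ∀ ω, Y ω = 0 ∨ Y ω = 1) (hp0 : ∀ ω, 0 < p ω) (hp1 : ∀ ω, p ω < 1)
    (hq₀ : StronglyMeasurable[m] q₀) (hq₁ : StronglyMeasurable[m] q₁)
    (hc₀ : StronglyMeasurable[m] c₀) (hc₁ : StronglyMeasurable[m] c₁)
    (hpA : μ[A | m] =ᵐ[μ] p) (hAY : μ[fun ω => A ω * Y ω | m] =ᵐ[μ] fun ω => p ω * q₁ ω)
    (h1AY : μ[fun ω => (1 - A ω) * Y ω | m] =ᵐ[μ] fun ω => (1 - p ω) * q₀ ω)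
    (hint : Integrable (fun ω => c₁ ω * (A ω * Y ω - q₁ ω * A ω)
      - c₀ ω * ((1 - A ω) * Y ω - q₀ ω * (1 - A ω))) μ) :
    μ[fun ω => c₁ ω * (A ω * Y ω - q₁ ω * A ω) - c₀ ω * ((1 - A ω) * Y ω - q₀ ω * (1 - A ω)) | m]
      =ᵐ[μ] 0 := by
  have h1A : ∀ ω, 1 - A ω = 0 ∨ 1 - A ω = 1 := fun ω => by
    rcases hAbin ω with h | h <;> simp [h]
  have hAYbin : ∀ ω, A ω * Y ω = 0 ∨ A ω * Y ω = 1 := fun ω => by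
    rcases hAbin ω with h | h <;> simp [h, hYbin ω]
  have h1AYbin : ∀ ω, (1 - A ω) * Y ω = 0 ∨ (1 - A ω) * Y ω = 1 := fun ω => by
    rcases h1A ω with h | h <;> simp [h, hYbin ω]
  have hY1 : ∀ ω, Y ω ≤ 1 := fun ω => by rcases hYbin ω with h | h <;> simp [h]
  have intA : Integrable A μ :=
    integrable_of_forall_abs_le_one hA fun ω => abs_le_one_of_eq_zero_or_eq_one (hAbin ω)
  have int1A : Integrable (fun ω => 1 - A ω) μ :=
    integrable_of_forall_abs_le_one (by fun_prop) fun ω => abs_le_one_of_eq_zero_or_eq_one (h1A ω)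
  have intAY : Integrable (fun ω => A ω * Y ω) μ :=
    integrable_of_forall_abs_le_one (by fun_prop) fun ω =>
      abs_le_one_of_eq_zero_or_eq_one (hAYbin ω)
  have int1AY : Integrable (fun ω => (1 - A ω) * Y ω) μ :=
    integrable_of_forall_abs_le_one (by fun_prop) fun ω =>
      abs_le_one_of_eq_zero_or_eq_one (h1AYbin ω)
  have h1pA : μ[fun ω => 1 - A ω | m] =ᵐ[μ] fun ω => 1 - p ω := by
    refine (condExp_sub (integrable_const 1) intA m).trans ?_
    filter_upwards [hpA] with ω hpω
    simp only [Pi.sub_apply, condExp_const hm, hpω]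
  -- On `{A = 1}` the residual is the treated term and on `{A = 0}` it vanishes.
  have intT₁ : Integrable (fun ω => c₁ ω * (A ω * Y ω - q₁ ω * A ω)) μ := by
    refine (hint.bdd_mul hA.aestronglyMeasurable
      (ae_of_all _ fun ω => abs_le_one_of_eq_zero_or_eq_one (hAbin ω))).congr
      (ae_of_all _ fun ω => ?_)
    rcases hAbin ω with h | h <;> simp [h]
  have intT₀ : Integrable (fun ω => c₀ ω * ((1 - A ω) * Y ω - q₀ ω * (1 - A ω))) μ :=
    (intT₁.sub hint).congr (ae_of_all _ fun ω => by simp only [Pi.sub_apply]; ring)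
  have hzero₁ : μ[fun ω => c₁ ω * (A ω * Y ω - q₁ ω * A ω) | m] =ᵐ[μ] 0 :=
    condExp_mul_sub_mul_ae_eq_zero hq₁ hc₁ hm intAY intA
      (ae_of_all _ fun ω => by rcases hAYbin ω with h | h <;> simp [h])
      (ae_of_all _ fun ω => by rcases hAbin ω with h | h <;> simp [h, hY1 ω]) hp0 hAY hpA intT₁
  have hzero₀ : μ[fun ω => c₀ ω * ((1 - A ω) * Y ω - q₀ ω * (1 - A ω)) | m] =ᵐ[μ] 0 :=
    condExp_mul_sub_mul_ae_eq_zero hq₀ hc₀ hm int1AY int1A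
      (ae_of_all _ fun ω => by rcases h1AYbin ω with h | h <;> simp [h])
      (ae_of_all _ fun ω => by rcases h1A ω with h | h <;> simp [h, hY1 ω])
      (fun ω => sub_pos.mpr (hp1 ω)) h1AY h1pA intT₀
  refine (condExp_sub intT₁ intT₀ m).trans ?_
  filter_upwards [hzero₁, hzero₀] with ω h₁ h₀
  simp only [Pi.sub_apply, h₁, h₀, Pi.zero_apply, sub_zero]

end

theorem stmt_14_general
    {Ω 𝒳 : Type*} [mΩ : MeasurableSpace Ω] [m𝒳 : MeasurableSpace 𝒳]
    (μ : Measure Ω) [IsProbabilityMeasure μ]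
    (X : Ω → 𝒳) (A Y : Ω → ℝ)
    (hX : Measurable X) (hA : Measurable A) (hY : Measurable Y)
    (hAbin : ∀ ω, A ω = 0 ∨ A ω = 1) (hYbin : ∀ ω, Y ω = 0 ∨ Y ω = 1)
    (m0 m1 pi gam h g : 𝒳 → ℝ)
    (hm0 : Measurable m0) (hm1 : Measurable m1) (hpi : Measurable pi)
    (hh : Measurable h)
    (hpi0 : ∀ x, 0 < pi x) (hpi1 : ∀ x, pi x < 1)
    -- correct specification: γ(x) = g(x;β₀)
    (hspec : ∀ x, gam x = g x)
    -- μ₀, μ₁, π are the true nuisance functions (conditional moments given X)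
    (hπX : μ[A | m𝒳.comap X] =ᵐ[μ] fun ω => pi (X ω))
    (hAY : μ[fun ω => A ω * Y ω | m𝒳.comap X] =ᵐ[μ] fun ω => pi (X ω) * m1 (X ω))
    (h1Y : μ[fun ω => (1 - A ω) * Y ω | m𝒳.comap X]
      =ᵐ[μ] fun ω => (1 - pi (X ω)) * m0 (X ω))
    -- integrability
    (hintφ : Integrable (fun ω =>
      h (X ω) * (m0 (X ω) / m1 (X ω) ^ 2 * (A ω * (Y ω - m1 (X ω))) / pi (X ω)
        - 1 / m1 (X ω) * ((1 - A ω) * (Y ω - m0 (X ω))) / (1 - pi (X ω))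
        + gam (X ω) - g (X ω))) μ) :
    -- (i) the influence function reduces pointwise
    (∀ ω, h (X ω) * (m0 (X ω) / m1 (X ω) ^ 2 * (A ω * (Y ω - m1 (X ω))) / pi (X ω)
          - 1 / m1 (X ω) * ((1 - A ω) * (Y ω - m0 (X ω))) / (1 - pi (X ω))
          + gam (X ω) - g (X ω))
      = h (X ω) * (m0 (X ω) / m1 (X ω) ^ 2 * (A ω * (Y ω - m1 (X ω))) / pi (X ω)
          - 1 / m1 (X ω) * ((1 - A ω) * (Y ω - m0 (X ω))) / (1 - pi (X ω))))
    -- (ii) the reduced function has conditional mean zero given X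
    ∧ (μ[fun ω => h (X ω) * (m0 (X ω) / m1 (X ω) ^ 2 * (A ω * (Y ω - m1 (X ω))) / pi (X ω)
          - 1 / m1 (X ω) * ((1 - A ω) * (Y ω - m0 (X ω))) / (1 - pi (X ω))) | m𝒳.comap X]
        =ᵐ[μ] fun _ => (0 : ℝ))
    -- (iii) β₀ solves the population moment condition
    ∧ ∫ ω, h (X ω) * (m0 (X ω) / m1 (X ω) ^ 2 * (A ω * (Y ω - m1 (X ω))) / pi (X ω)
          - 1 / m1 (X ω) * ((1 - A ω) * (Y ω - m0 (X ω))) / (1 - pi (X ω))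
          + gam (X ω) - g (X ω)) ∂μ = 0 := by
  simp only [hspec, add_sub_cancel_right, implies_true, true_and] at hintφ ⊢
  have hXm : Measurable[m𝒳.comap X] X := comap_measurable X
  have hdecomp : (fun ω => h (X ω) * (m0 (X ω) / m1 (X ω) ^ 2 * (A ω * (Y ω - m1 (X ω))) / pi (X ω)
      - 1 / m1 (X ω) * ((1 - A ω) * (Y ω - m0 (X ω))) / (1 - pi (X ω))))
      = fun ω => h (X ω) * m0 (X ω) / m1 (X ω) ^ 2 / pi (X ω) * (A ω * Y ω - m1 (X ω) * A ω)
        - h (X ω) / m1 (X ω) / (1 - pi (X ω))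
          * ((1 - A ω) * Y ω - m0 (X ω) * (1 - A ω)) :=
    funext fun ω => by ring
  rw [hdecomp] at hintφ ⊢
  have hzero := condExp_aipw_ae_eq_zero hX.comap_le hA hY hAbin hYbin
    (fun ω => hpi0 (X ω)) (fun ω => hpi1 (X ω))
    (by fun_prop : Measurable[m𝒳.comap X] _).stronglyMeasurable
    (by fun_prop : Measurable[m𝒳.comap X] _).stronglyMeasurable
    (by fun_prop : Measurable[m𝒳.comap X] _).stronglyMeasurable
    (by fun_prop : Measurable[m𝒳.comap X] _).stronglyMeasurable hπX hAY h1Y hintφ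
  refine ⟨hzero, ?_⟩
  rw [← integral_condExp hX.comap_le, integral_congr_ae hzero, integral_zero']

/-- If the parametric model is correctly specified, `γ(x) = g(x;β₀)` for all `x`, then the
uncentered efficient influence function at `β₀` reduces to
`h(X;β₀)[(μ₀/μ₁²)A(Y-μ₁)/π - (1/μ₁)(1-A)(Y-μ₀)/(1-π)]`, this reduced function has
conditional mean zero given `X`, and hence `β₀` solves the population moment condition
`Ψ(β₀) = E[φ(Z;β₀,η)] = 0`. -/
theorem stmt_14
    {Ω 𝒳 : Type*} [mΩ : MeasurableSpace Ω] [m𝒳 : MeasurableSpace 𝒳]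
    (μ : Measure Ω) [IsProbabilityMeasure μ]
    (X : Ω → 𝒳) (A Y : Ω → ℝ)
    (hX : Measurable X) (hA : Measurable A) (hY : Measurable Y)
    (hAbin : ∀ ω, A ω = 0 ∨ A ω = 1) (hYbin : ∀ ω, Y ω = 0 ∨ Y ω = 1)
    (m0 m1 pi gam h g : 𝒳 → ℝ)
    (hm0 : Measurable m0) (hm1 : Measurable m1) (hpi : Measurable pi)
    (hh : Measurable h) (hg : Measurable g)
    (hm1pos : ∀ x, 0 < m1 x) (hm0nonneg : ∀ x, 0 ≤ m0 x)
    (hpi0 : ∀ x, 0 < pi x) (hpi1 : ∀ x, pi x < 1)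
    (hgam : ∀ x, gam x = 1 - m0 x / m1 x)
    -- correct specification: γ(x) = g(x;β₀)
    (hspec : ∀ x, gam x = g x)
    -- μ₀, μ₁, π are the true nuisance functions (conditional moments given X)
    (hπX : μ[A | m𝒳.comap X] =ᵐ[μ] fun ω => pi (X ω))
    (hAY : μ[fun ω => A ω * Y ω | m𝒳.comap X] =ᵐ[μ] fun ω => pi (X ω) * m1 (X ω))
    (h1Y : μ[fun ω => (1 - A ω) * Y ω | m𝒳.comap X]
      =ᵐ[μ] fun ω => (1 - pi (X ω)) * m0 (X ω))
    -- integrability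
    (hintφ : Integrable (fun ω =>
      h (X ω) * (m0 (X ω) / m1 (X ω) ^ 2 * (A ω * (Y ω - m1 (X ω))) / pi (X ω)
        - 1 / m1 (X ω) * ((1 - A ω) * (Y ω - m0 (X ω))) / (1 - pi (X ω))
        + gam (X ω) - g (X ω))) μ)
    (hintc1 : Integrable (fun ω => h (X ω) * (m0 (X ω) / m1 (X ω) ^ 2) / pi (X ω)) μ)
    (hintc2 : Integrable (fun ω => h (X ω) / (m1 (X ω) * (1 - pi (X ω)))) μ) :
    -- (i) the influence function reduces pointwise
    (∀ ω, h (X ω) * (m0 (X ω) / m1 (X ω) ^ 2 * (A ω * (Y ω - m1 (X ω))) / pi (X ω)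
          - 1 / m1 (X ω) * ((1 - A ω) * (Y ω - m0 (X ω))) / (1 - pi (X ω))
          + gam (X ω) - g (X ω))
      = h (X ω) * (m0 (X ω) / m1 (X ω) ^ 2 * (A ω * (Y ω - m1 (X ω))) / pi (X ω)
          - 1 / m1 (X ω) * ((1 - A ω) * (Y ω - m0 (X ω))) / (1 - pi (X ω))))
    -- (ii) the reduced function has conditional mean zero given X
    ∧ (μ[fun ω => h (X ω) * (m0 (X ω) / m1 (X ω) ^ 2 * (A ω * (Y ω - m1 (X ω))) / pi (X ω)
          - 1 / m1 (X ω) * ((1 - A ω) * (Y ω - m0 (X ω))) / (1 - pi (X ω))) | m𝒳.comap X]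
        =ᵐ[μ] fun _ => (0 : ℝ))
    -- (iii) β₀ solves the population moment condition
    ∧ ∫ ω, h (X ω) * (m0 (X ω) / m1 (X ω) ^ 2 * (A ω * (Y ω - m1 (X ω))) / pi (X ω)
          - 1 / m1 (X ω) * ((1 - A ω) * (Y ω - m0 (X ω))) / (1 - pi (X ω))
          + gam (X ω) - g (X ω)) ∂μ = 0 :=
  stmt_14_general (mΩ := mΩ) (m𝒳 := m𝒳) μ X A Y hX hA hY hAbin hYbin m0 m1 pi gam h g hm0 hm1 hpi hh
    hpi0 hpi1 hspec hπX hAY h1Y hintφ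
end
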